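/- arXiv:2604.00365 — 4 statements merged into one kernel-verified Lean document; each statement's English description precedes it below -/
import Mathlib

section
/- For any point y = (y_0, y_r) ∈ R × R^{m-1}, the Euclidean distance from y to the second-order cone Q_m equals 0 if y ∈ Q_m, equals ‖y‖ if -y ∈ Q_m, and equals (√2/2)(‖y_r‖ - y_0) otherwise. -/
open scoped RealInnerProductSpace

noncomputable section

/-- The "tail" `y_r` of a vector `y = (y_0, y_r) ∈ ℝ × ℝ^d`. -/
def tail {d : ℕ} (y : EuclideanSpace ℝ (Fin (d+1))) : EuclideanSpace ℝ (Fin d) :=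
  WithLp.toLp 2 (fun i : Fin d => y i.succ)

/-- The second-order (Lorentz) cone `Q_{d+1} = {(y_0, y_r) : ‖y_r‖ ≤ y_0}`. -/
def SOC (d : ℕ) : Set (EuclideanSpace ℝ (Fin (d+1))) := {y | ‖tail y‖ ≤ y 0}

/-- `x̃ = (-x_0, x_r)`. -/
def tilde {d : ℕ} (x : EuclideanSpace ℝ (Fin (d+1))) : EuclideanSpace ℝ (Fin (d+1)) :=
  WithLp.toLp 2 (fun i => if i = 0 then -(x 0) else x i)

lemma tail_sub {d : ℕ} (y u : EuclideanSpace ℝ (Fin (d+1))) :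
    tail (y - u) = tail y - tail u := by
  ext i; simp [tail]

lemma tail_neg {d : ℕ} (y : EuclideanSpace ℝ (Fin (d+1))) :
    tail (-y) = -tail y := by
  ext i; simp [tail]

lemma norm_sq_split {d : ℕ} (y : EuclideanSpace ℝ (Fin (d+1))) :
    ‖y‖^2 = (y 0)^2 + ‖tail y‖^2 := by
  have h1 : ‖y‖^2 = ∑ i, y i ^ 2 := by
    rw [EuclideanSpace.norm_eq, Real.sq_sqrt (by positivity)]
    simp [Real.norm_eq_abs, sq_abs]
  have h2 : ‖tail y‖^2 = ∑ i : Fin d, y i.succ ^ 2 := by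
    rw [EuclideanSpace.norm_eq, Real.sq_sqrt (by positivity)]
    simp [Real.norm_eq_abs, sq_abs, tail]
  rw [h1, h2, Fin.sum_univ_succ]

lemma norm_sub_sq_split {d : ℕ} (y u : EuclideanSpace ℝ (Fin (d+1))) :
    ‖y - u‖^2 = (y 0 - u 0)^2 + ‖tail y - tail u‖^2 := by
  rw [norm_sq_split (y - u), tail_sub]
  simp

lemma zero_mem_soc (d : ℕ) : (0 : EuclideanSpace ℝ (Fin (d+1))) ∈ SOC d := by
  have h : tail (0 : EuclideanSpace ℝ (Fin (d+1))) = 0 := by ext i; simp [tail]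
  simp [SOC, h]

lemma le_infDist_of {α : Type*} [PseudoMetricSpace α] {s : Set α} (hne : s.Nonempty)
    {x : α} {b : ℝ} (h : ∀ u ∈ s, b ≤ dist x u) : b ≤ Metric.infDist x s := by
  rw [← not_lt]
  intro hlt
  obtain ⟨u, hu, hd⟩ := (Metric.infDist_lt_iff hne).mp hlt
  exact absurd hd (not_lt.mpr (h u hu))

lemma lb_case2 {d : ℕ} (y u : EuclideanSpace ℝ (Fin (d+1))) (hu : u ∈ SOC d)
    (hy : ‖tail y‖ ≤ -(y 0)) : ‖y‖ ≤ ‖y - u‖ := by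
  have hsa : ‖tail u‖ ≤ u 0 := hu
  have hs0 : 0 ≤ ‖tail u‖ := norm_nonneg _
  have ht0 : 0 ≤ ‖tail y‖ := norm_nonneg _
  have hN : |‖tail y‖ - ‖tail u‖| ≤ ‖tail y - tail u‖ := abs_norm_sub_norm_le _ _
  have hN2 : (‖tail y‖ - ‖tail u‖)^2 ≤ ‖tail y - tail u‖^2 := by
    nlinarith [abs_nonneg (‖tail y‖ - ‖tail u‖), sq_abs (‖tail y‖ - ‖tail u‖),
      norm_nonneg (tail y - tail u)]
  have hsq : ‖y‖^2 ≤ ‖y - u‖^2 := by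
    rw [norm_sq_split y, norm_sub_sq_split]
    nlinarith [mul_nonneg ht0 (sub_nonneg.mpr hsa),
      mul_nonneg (le_trans hs0 hsa) (sub_nonneg.mpr hy)]
  nlinarith [norm_nonneg y, norm_nonneg (y - u)]

lemma lb_case3 {d : ℕ} (y u : EuclideanSpace ℝ (Fin (d+1))) (hu : u ∈ SOC d)
    (hy : y 0 ≤ ‖tail y‖) : Real.sqrt 2 / 2 * (‖tail y‖ - y 0) ≤ ‖y - u‖ := by
  have hsa : ‖tail u‖ ≤ u 0 := hu
  have hs0 : 0 ≤ ‖tail u‖ := norm_nonneg _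
  have hN : |‖tail y‖ - ‖tail u‖| ≤ ‖tail y - tail u‖ := abs_norm_sub_norm_le _ _
  have hN2 : (‖tail y‖ - ‖tail u‖)^2 ≤ ‖tail y - tail u‖^2 := by
    nlinarith [abs_nonneg (‖tail y‖ - ‖tail u‖), sq_abs (‖tail y‖ - ‖tail u‖),
      norm_nonneg (tail y - tail u)]
  have h' : (‖tail y‖ - y 0)^2 / 2 ≤ ‖y - u‖^2 := by
    rw [norm_sub_sq_split]
    nlinarith [sq_nonneg (u 0 - y 0 - (‖tail y‖ - ‖tail u‖)),
      mul_nonneg (sub_nonneg.mpr hsa) (sub_nonneg.mpr hy),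
      sq_nonneg (u 0 - ‖tail u‖)]
  have hs2 : (Real.sqrt 2)^2 = 2 := Real.sq_sqrt (by norm_num)
  have hlhs : (Real.sqrt 2 / 2 * (‖tail y‖ - y 0))^2 = (‖tail y‖ - y 0)^2 / 2 := by
    rw [mul_pow, div_pow, hs2]; ring
  have hrn : 0 ≤ Real.sqrt 2 / 2 * (‖tail y‖ - y 0) := by
    have := Real.sqrt_nonneg 2
    nlinarith
  nlinarith [norm_nonneg (y - u), hlhs, h']

/-- The projection witness for case 3, with its distance computation. -/
lemma ub_case3 {d : ℕ} (y : EuclideanSpace ℝ (Fin (d+1)))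
    (hy1 : y 0 < ‖tail y‖) (hy2 : -(y 0) < ‖tail y‖) :
    ∃ p ∈ SOC d, dist y p = Real.sqrt 2 / 2 * (‖tail y‖ - y 0) := by
  set t : ℝ := ‖tail y‖ with ht
  have htpos : 0 < t := by linarith
  set c : ℝ := (y 0 + t) / (2 * t) with hc
  refine ⟨WithLp.toLp 2 (fun i => if i = 0 then (y 0 + t) / 2 else c * y i), ?_, ?_⟩
  all_goals
    set p : EuclideanSpace ℝ (Fin (d+1)) :=
      WithLp.toLp 2 (fun i => if i = 0 then (y 0 + t) / 2 else c * y i) with hp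
  · have hp0 : p 0 = (y 0 + t) / 2 := by simp [hp]
    have htailp : tail p = c • tail y := by
      ext i
      simp [tail, hp, Fin.succ_ne_zero, PiLp.smul_apply, smul_eq_mul]
    have hcpos : 0 ≤ c := div_nonneg (by linarith) (by linarith)
    have hnormtp : ‖tail p‖ = (y 0 + t) / 2 := by
      rw [htailp, norm_smul, Real.norm_eq_abs, abs_of_nonneg hcpos, ← ht, hc]
      field_simp
    show ‖tail p‖ ≤ p 0
    rw [hnormtp, hp0]
  · have hp0 : p 0 = (y 0 + t) / 2 := by simp [hp]
    have htailp : tail p = c • tail y := by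
      ext i
      simp [tail, hp, Fin.succ_ne_zero, PiLp.smul_apply, smul_eq_mul]
    rw [dist_eq_norm]
    have htt : tail y - tail p = (1 - c) • tail y := by
      rw [htailp]; module
    have h1c : 0 ≤ 1 - c := by
      rw [hc, sub_nonneg, div_le_one (by linarith)]
      linarith
    have hnsq : ‖y - p‖^2 = (t - y 0)^2 / 2 := by
      rw [norm_sub_sq_split, htt, norm_smul, Real.norm_eq_abs, abs_of_nonneg h1c, ← ht, hp0, hc]
      field_simp
      ring
    have hs2 : (Real.sqrt 2)^2 = 2 := Real.sq_sqrt (by norm_num)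
    have hrhs : (Real.sqrt 2 / 2 * (t - y 0))^2 = (t - y 0)^2 / 2 := by
      rw [mul_pow, div_pow, hs2]; ring
    have h2 : ‖y - p‖^2 = (Real.sqrt 2 / 2 * (t - y 0))^2 := by rw [hnsq, hrhs]
    have hrn : 0 ≤ Real.sqrt 2 / 2 * (t - y 0) := by
      have := Real.sqrt_nonneg 2
      nlinarith
    calc ‖y - p‖ = Real.sqrt (‖y - p‖^2) := (Real.sqrt_sq (norm_nonneg _)).symm
      _ = Real.sqrt ((Real.sqrt 2 / 2 * (t - y 0))^2) := by rw [h2]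
      _ = _ := Real.sqrt_sq hrn

theorem dist_to_soc (d : ℕ) (y : EuclideanSpace ℝ (Fin (d+1))) :
    (y ∈ SOC d → Metric.infDist y (SOC d) = 0) ∧
    (-y ∈ SOC d → Metric.infDist y (SOC d) = ‖y‖) ∧
    (y ∉ SOC d → -y ∉ SOC d →
      Metric.infDist y (SOC d) = (Real.sqrt 2 / 2) * (‖tail y‖ - y 0)) := by
  have hne : (SOC d).Nonempty := ⟨0, zero_mem_soc d⟩
  refine ⟨fun h => Metric.infDist_zero_of_mem h, fun h => ?_, fun h1 h2 => ?_⟩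
  · -- case -y ∈ SOC : answer ‖y‖
    have hty : ‖tail y‖ ≤ -(y 0) := by
      simpa [SOC, tail_neg] using h
    apply le_antisymm
    · calc Metric.infDist y (SOC d) ≤ dist y 0 := Metric.infDist_le_dist_of_mem (zero_mem_soc d)
        _ = ‖y‖ := by simp
    · refine le_infDist_of hne fun u hu => ?_
      rw [dist_eq_norm]
      exact lb_case2 y u hu hty
  · -- case y ∉ SOC, -y ∉ SOC
    have hy1 : y 0 < ‖tail y‖ := by
      simpa [SOC, not_le] using h1
    have hy2 : -(y 0) < ‖tail y‖ := by
      have := h2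
      simp only [SOC, Set.mem_setOf_eq, tail_neg, norm_neg, not_le] at this
      simpa using this
    obtain ⟨p, hpmem, hdistp⟩ := ub_case3 y hy1 hy2
    apply le_antisymm
    · calc Metric.infDist y (SOC d) ≤ dist y p := Metric.infDist_le_dist_of_mem hpmem
        _ = _ := hdistp
    · refine le_infDist_of hne fun u hu => ?_
      rw [dist_eq_norm]
      exact lb_case3 y u hu hy1.le
end
end

section
/- Let v ∈ bd⁺(Q_m) (so v = (v_0, v_r) with v_0 = ‖v_r‖ > 0), let g(x) = t(x)·v for a linear functional t(x) = ⟨x - x̄, a⟩ with a ≠ 0, and let Ω := {x : g(x) ∈ Q_m}. Then Ω = {x : t(x) ≥ 0} and dist(x, Ω) = κ · dist(g(x), Q_m) for all x ∈ R^n, where κ := 1/(‖a‖·‖v‖). -/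
open scoped RealInnerProductSpace
noncomputable section
lemma le_infDist' {α : Type*} [PseudoMetricSpace α] {s : Set α} {x : α} {b : ℝ}
    (hs : s.Nonempty) (h : ∀ y ∈ s, b ≤ dist x y) : b ≤ Metric.infDist x s := by
  by_contra hlt
  push_neg at hlt
  obtain ⟨y, hy, hd⟩ := (Metric.infDist_lt_iff hs).1 hlt
  exact absurd (h y hy) (not_le.2 hd)

lemma tail_smul {d : ℕ} (t : ℝ) (v : EuclideanSpace ℝ (Fin (d+1))) :
    tail (t • v) = t • tail v := rfl

lemma inner_split {d : ℕ} (v y : EuclideanSpace ℝ (Fin (d+1))) :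
    ⟪v, y⟫ = v 0 * y 0 + ⟪tail v, tail y⟫ := by
  simp [PiLp.inner_apply, tail, Fin.sum_univ_succ, RCLike.inner_apply]
  ring

lemma smul_mem_SOC_iff {d : ℕ} (v : EuclideanSpace ℝ (Fin (d+1)))
    (hv : v 0 = ‖tail v‖) (hpos : 0 < v 0) (t : ℝ) :
    t • v ∈ SOC d ↔ 0 ≤ t := by
  have h0 : (t • v) 0 = t * v 0 := rfl
  constructor
  · intro h
    have : |t| * ‖tail v‖ ≤ t * v 0 := by
      simpa [SOC, tail_smul, norm_smul, h0] using h
    rw [hv] at this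
    have hvt : (0:ℝ) < ‖tail v‖ := hv ▸ hpos
    have := le_of_mul_le_mul_right this hvt
    exact le_trans (abs_nonneg t) this
  · intro ht
    show ‖tail (t • v)‖ ≤ (t • v) 0
    rw [tail_smul, norm_smul, h0, hv, Real.norm_eq_abs, abs_of_nonneg ht]

lemma inner_nonneg_SOC {d : ℕ} (v : EuclideanSpace ℝ (Fin (d+1)))
    (hv : v 0 = ‖tail v‖) (hpos : 0 < v 0) {y : EuclideanSpace ℝ (Fin (d+1))}
    (hy : y ∈ SOC d) : 0 ≤ ⟪v, y⟫ := by
  rw [inner_split]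
  have h1 : -(‖tail v‖ * ‖tail y‖) ≤ ⟪tail v, tail y⟫ :=
    neg_le_of_abs_le (abs_real_inner_le_norm _ _)
  have h2 : ‖tail v‖ * ‖tail y‖ ≤ v 0 * y 0 := by
    rw [hv] at hpos ⊢
    exact mul_le_mul_of_nonneg_left hy hpos.le
  linarith

lemma dist_SOC_neg {d : ℕ} (v : EuclideanSpace ℝ (Fin (d+1)))
    (hv : v 0 = ‖tail v‖) (hpos : 0 < v 0) {t : ℝ} (ht : t < 0) :
    Metric.infDist (t • v) (SOC d) = -t * ‖v‖ := by
  have h0 : (0 : EuclideanSpace ℝ (Fin (d+1))) ∈ SOC d := by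
    simp [SOC, tail]
    rfl
  refine le_antisymm ?_ ?_
  · calc Metric.infDist (t • v) (SOC d) ≤ dist (t • v) 0 :=
        Metric.infDist_le_dist_of_mem h0
    _ = ‖t • v‖ := by rw [dist_zero_right]
    _ = -t * ‖v‖ := by rw [norm_smul, Real.norm_eq_abs, abs_of_neg ht]
  · refine le_infDist' ⟨0, h0⟩ fun y hy => ?_
    have hiv : 0 ≤ ⟪v, y⟫ := inner_nonneg_SOC v hv hpos hy
    have key : ‖t • v‖ ^ 2 ≤ dist (t • v) y ^ 2 := by
      rw [dist_eq_norm, ← real_inner_self_eq_norm_sq, ← real_inner_self_eq_norm_sq]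
      rw [inner_sub_sub_self]
      have h1 : ⟪t • v, y⟫ = t * ⟪v, y⟫ := real_inner_smul_left _ _ _
      have h2 : 0 ≤ ⟪y, y⟫ := real_inner_self_nonneg
      have h3 : t * ⟪v, y⟫ ≤ 0 := mul_nonpos_of_nonpos_of_nonneg ht.le hiv
      have h5 : ⟪y, t • v⟫ = ⟪t • v, y⟫ := real_inner_comm _ _
      linarith
    have h4 : ‖t • v‖ = -t * ‖v‖ := by rw [norm_smul, Real.norm_eq_abs, abs_of_neg ht]
    rw [h4] at key
    nlinarith [dist_nonneg (x := t • v) (y := y), norm_nonneg v]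

theorem mscq_ray_image (n d : ℕ) (v : EuclideanSpace ℝ (Fin (d+1)))
    (hv : v 0 = ‖tail v‖) (hpos : 0 < v 0)
    (a xb : EuclideanSpace ℝ (Fin n)) (ha : a ≠ 0) :
    {x : EuclideanSpace ℝ (Fin n) | ⟪x - xb, a⟫ • v ∈ SOC d}
        = {x : EuclideanSpace ℝ (Fin n) | (0:ℝ) ≤ ⟪x - xb, a⟫} ∧
    ∀ x : EuclideanSpace ℝ (Fin n),
      Metric.infDist x {x' : EuclideanSpace ℝ (Fin n) | ⟪x' - xb, a⟫ • v ∈ SOC d}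
        = (1 / (‖a‖ * ‖v‖)) * Metric.infDist (⟪x - xb, a⟫ • v) (SOC d) := by
  have hseteq : {x : EuclideanSpace ℝ (Fin n) | ⟪x - xb, a⟫ • v ∈ SOC d}
      = {x : EuclideanSpace ℝ (Fin n) | (0:ℝ) ≤ ⟪x - xb, a⟫} := by
    ext x
    exact smul_mem_SOC_iff v hv hpos _
  have hna : (0:ℝ) < ‖a‖ := norm_pos_iff.mpr ha
  have hnv : (0:ℝ) < ‖v‖ := by
    refine norm_pos_iff.mpr fun h => ?_
    rw [h] at hpos; simp at hpos
  refine ⟨hseteq, fun x => ?_⟩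
  rw [hseteq]
  set t := ⟪x - xb, a⟫ with hdef
  rcases le_or_gt 0 t with ht | ht
  · rw [Metric.infDist_zero_of_mem (by exact ht),
      Metric.infDist_zero_of_mem ((smul_mem_SOC_iff v hv hpos t).mpr ht), mul_zero]
  · rw [dist_SOC_neg v hv hpos ht]
    have goal : Metric.infDist x {x' : EuclideanSpace ℝ (Fin n) | (0:ℝ) ≤ ⟪x' - xb, a⟫}
        = -t / ‖a‖ := by
      have hxb : xb ∈ {x' : EuclideanSpace ℝ (Fin n) | (0:ℝ) ≤ ⟪x' - xb, a⟫} := by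
        simp
      refine le_antisymm ?_ ?_
      · set x' := x + (-t / ‖a‖ ^ 2) • a with hx'
        have hmem : x' ∈ {x' : EuclideanSpace ℝ (Fin n) | (0:ℝ) ≤ ⟪x' - xb, a⟫} := by
          show (0:ℝ) ≤ ⟪x' - xb, a⟫
          have : x' - xb = (x - xb) + (-t / ‖a‖ ^ 2) • a := by
            rw [hx']; abel
          rw [this, inner_add_left, real_inner_smul_left, real_inner_self_eq_norm_sq]
          rw [← hdef]
          field_simp
          norm_num
        calc Metric.infDist x _ ≤ dist x x' := Metric.infDist_le_dist_of_mem hmem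
        _ = ‖(-t / ‖a‖ ^ 2) • a‖ := by
            rw [dist_eq_norm, hx']; simp
        _ = -t / ‖a‖ := by
            rw [norm_smul, Real.norm_eq_abs, abs_of_nonneg (div_nonneg (by linarith) (by positivity))]
            field_simp
      · refine le_infDist' ⟨xb, hxb⟩ fun y hy => ?_
        have hy' : (0:ℝ) ≤ ⟪y - xb, a⟫ := hy
        have hsub : ⟪y - x, a⟫ = ⟪y - xb, a⟫ - t := by
          rw [hdef, ← inner_sub_left]; congr 1; abel
        have hcs : ⟪y - x, a⟫ ≤ ‖y - x‖ * ‖a‖ := real_inner_le_norm _ _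
        have : -t ≤ ‖y - x‖ * ‖a‖ := by linarith
        rw [dist_comm, dist_eq_norm]
        rw [div_le_iff₀ hna]
        exact this
    rw [goal]
    field_simp
end
end

section
/- Define G : {x ∈ R³ : x_1² + x_3² > 0} → R by G(x) = x_1 - √(x_1² + x_3²). Then the gradient ∇G(x) = (1 - x_1/√(x_1²+x_3²), 0, -x_3/√(x_1²+x_3²)) vanishes exactly when x_3 = 0 and x_1 > 0; in particular ∇G(1,0,0) = 0 while ∇G(1,0,1/n) ≠ 0 for all n ≥ 1, so the dimension of span{∇G(x)} is not locally constant at (1,0,0). -/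
open scoped RealInnerProductSpace

noncomputable section

/-- The reduced map G(x) = x_0 - sqrt(x_0^2 + x_2^2). -/
def G13 (x : EuclideanSpace ℝ (Fin 3)) : ℝ :=
  x 0 - Real.sqrt ((x 0)^2 + (x 2)^2)

abbrev Pj (i : Fin 3) : EuclideanSpace ℝ (Fin 3) →L[ℝ] ℝ := EuclideanSpace.proj i

lemma hasGradientAt_G13 (x : EuclideanSpace ℝ (Fin 3)) (hs : 0 < (x 0)^2 + (x 2)^2) :
    HasGradientAt G13 (!₂[1 - x 0 / Real.sqrt ((x 0)^2 + (x 2)^2), 0,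
      -(x 2) / Real.sqrt ((x 0)^2 + (x 2)^2)] : EuclideanSpace ℝ (Fin 3)) x := by
  have hsq : 0 < Real.sqrt ((x 0)^2 + (x 2)^2) := Real.sqrt_pos.mpr hs
  have h0 : HasFDerivAt (fun y : EuclideanSpace ℝ (Fin 3) => y 0) (Pj 0) x := by
    exact (Pj 0).hasFDerivAt
  have h2 : HasFDerivAt (fun y : EuclideanSpace ℝ (Fin 3) => y 2) (Pj 2) x := by
    exact (Pj 2).hasFDerivAt
  have hq : HasFDerivAt (fun y : EuclideanSpace ℝ (Fin 3) => (y 0)^2 + (y 2)^2)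
      ((x 0 • Pj 0 + x 0 • Pj 0) + (x 2 • Pj 2 + x 2 • Pj 2)) x := by
    have := (h0.mul h0).add (h2.mul h2)
    exact this.congr_of_eventuallyEq (Filter.Eventually.of_forall fun y => by simp [pow_two])
  have hF := h0.sub ((Real.hasDerivAt_sqrt hs.ne').comp_hasFDerivAt x hq)
  rw [hasGradientAt_iff_hasFDerivAt]
  refine hF.congr_fderiv ?_
  symm
  apply ContinuousLinearMap.ext
  intro y
  rw [InnerProductSpace.toDual_apply_apply, PiLp.inner_apply]
  simp only [RCLike.inner_apply, conj_trivial, Fin.sum_univ_three,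
    Matrix.cons_val_zero, Matrix.cons_val_one, Matrix.head_cons, Matrix.cons_val_two,
    Matrix.tail_cons, ContinuousLinearMap.sub_apply, ContinuousLinearMap.smul_apply,
    ContinuousLinearMap.add_apply, smul_eq_mul,
    ContinuousLinearMap.coe_smul', Pi.smul_apply, PiLp.proj_apply]
  field_simp
  ring

lemma grad_main (x : EuclideanSpace ℝ (Fin 3)) (hs : 0 < (x 0)^2 + (x 2)^2) :
      gradient G13 x
          = (!₂[1 - x 0 / Real.sqrt ((x 0)^2 + (x 2)^2), 0,
              -(x 2) / Real.sqrt ((x 0)^2 + (x 2)^2)] : EuclideanSpace ℝ (Fin 3)) ∧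
      (gradient G13 x = 0 ↔ x 2 = 0 ∧ 0 < x 0) := by
  have hg := (hasGradientAt_G13 x hs).gradient
  have hsq : 0 < Real.sqrt ((x 0)^2 + (x 2)^2) := Real.sqrt_pos.mpr hs
  refine ⟨hg, ?_, ?_⟩
  · intro h
    rw [hg] at h
    have h2 : -(x 2) / Real.sqrt ((x 0)^2 + (x 2)^2) = 0 := by
      have := congrArg (· 2) h
      simpa using this
    have hx2 : x 2 = 0 := by
      field_simp at h2; simpa using h2
    have h0 : 1 - x 0 / Real.sqrt ((x 0)^2 + (x 2)^2) = 0 := by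
      have := congrArg (· 0) h
      simpa using this
    rw [hx2] at h0 hs
    simp only [ne_eq, OfNat.ofNat_ne_zero, not_false_eq_true, zero_pow, add_zero] at h0 hs
    have hx0 : x 0 ≠ 0 := by
      intro hz; rw [hz] at hs; simp at hs
    have hsqrt : Real.sqrt ((x 0)^2) = |x 0| := by
      rw [Real.sqrt_sq_eq_abs]
    rw [hsqrt] at h0
    refine ⟨hx2, ?_⟩
    by_contra hle
    push_neg at hle
    have : |x 0| = -(x 0) := abs_of_nonpos hle
    rw [this] at h0
    have : x 0 / -(x 0) = -1 := by field_simp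
    rw [this] at h0
    norm_num at h0
  · rintro ⟨hx2, hx0⟩
    rw [hg]
    ext i
    have hsqrt : Real.sqrt ((x 0)^2 + (x 2)^2) = x 0 := by
      rw [hx2]; simp [Real.sqrt_sq hx0.le]
    fin_cases i <;>
      simp [hx2, Real.sqrt_sq hx0.le, div_self hx0.ne']

theorem fcr_fails_at_point :
    (∀ x : EuclideanSpace ℝ (Fin 3), 0 < (x 0)^2 + (x 2)^2 →
      gradient G13 x
          = (!₂[1 - x 0 / Real.sqrt ((x 0)^2 + (x 2)^2), 0,
              -(x 2) / Real.sqrt ((x 0)^2 + (x 2)^2)] : EuclideanSpace ℝ (Fin 3)) ∧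
      (gradient G13 x = 0 ↔ x 2 = 0 ∧ 0 < x 0)) ∧
    gradient G13 (!₂[1, 0, 0] : EuclideanSpace ℝ (Fin 3)) = 0 ∧
    (∀ n : ℕ, 1 ≤ n →
      gradient G13 (!₂[1, 0, 1 / (n:ℝ)] : EuclideanSpace ℝ (Fin 3)) ≠ 0) ∧
    ¬ (∀ᶠ x in nhds (!₂[1, 0, 0] : EuclideanSpace ℝ (Fin 3)),
        Module.finrank ℝ (Submodule.span ℝ {gradient G13 x})
          = Module.finrank ℝ
              (Submodule.span ℝ {gradient G13 (!₂[1, 0, 0] : EuclideanSpace ℝ (Fin 3))})) := by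
  have hc : (0:ℝ) < ((!₂[1,0,0] : EuclideanSpace ℝ (Fin 3)) 0)^2
      + ((!₂[1,0,0] : EuclideanSpace ℝ (Fin 3)) 2)^2 := by show (0:ℝ) < 1^2 + 0^2; norm_num
  have hcen : gradient G13 (!₂[1, 0, 0] : EuclideanSpace ℝ (Fin 3)) = 0 := by
    rw [(grad_main _ hc).2]
    exact ⟨rfl, by norm_num [Matrix.cons_val]⟩
  have hn : ∀ n : ℕ, 1 ≤ n →
      gradient G13 (!₂[1, 0, 1 / (n:ℝ)] : EuclideanSpace ℝ (Fin 3)) ≠ 0 := by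
    intro n hn1
    have hnR : (0:ℝ) < (n:ℝ) := by exact_mod_cast hn1
    have hp : (0:ℝ) < ((!₂[1,0,1/(n:ℝ)] : EuclideanSpace ℝ (Fin 3)) 0)^2
        + ((!₂[1,0,1/(n:ℝ)] : EuclideanSpace ℝ (Fin 3)) 2)^2 := by
      have h00 : ((!₂[1,0,1/(n:ℝ)] : EuclideanSpace ℝ (Fin 3)) 0) = 1 := rfl
      rw [h00]; positivity
    intro h
    obtain ⟨h2, -⟩ := (grad_main _ hp).2.mp h
    have : (1 : ℝ) / n = 0 := h2
    rw [div_eq_zero_iff] at this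
    rcases this with h | h
    · norm_num at h
    · exact hnR.ne' h
  refine ⟨fun x hs => grad_main x hs, hcen, hn, ?_⟩
  intro H
  have htend : Filter.Tendsto (fun n : ℕ => (!₂[1, 0, 1/(n:ℝ)] : EuclideanSpace ℝ (Fin 3)))
      Filter.atTop (nhds (!₂[1,0,0] : EuclideanSpace ℝ (Fin 3))) := by
    have h1 : Filter.Tendsto (fun n : ℕ => (![1, 0, 1/(n:ℝ)] : Fin 3 → ℝ))
        Filter.atTop (nhds (![1,0,0] : Fin 3 → ℝ)) := by
      rw [tendsto_pi_nhds]
      intro i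
      fin_cases i
      · simp
      · simp
      · simpa using tendsto_one_div_atTop_nhds_zero_nat (𝕜 := ℝ)
    exact ((EuclideanSpace.equiv (Fin 3) ℝ).symm.continuous.tendsto _).comp h1
  have hev := htend.eventually H
  rw [Filter.eventually_atTop] at hev
  obtain ⟨N, hN⟩ := hev
  have key := hN (max N 1) (le_max_left _ _)
  have hne := hn (max N 1) (le_max_right _ _)
  rw [hcen] at key
  rw [finrank_span_singleton hne] at key
  rw [Submodule.span_zero_singleton, finrank_bot] at key
  exact one_ne_zero key
end
end

section
/- Let g(x) = Ax + b be affine with ḡ := g(x̄) ∈ bd⁺(Q_m), and define φ(x) := g_0(x) - ‖g_r(x)‖ on a neighborhood where g_r ≠ 0. If ∇φ(x̄) = 0 and ∇²φ(x̄) = 0, then there exist w ∈ R^n and c ∈ R such that g_0(x) = ⟨w, x⟩ + c and g_r(x) = (⟨w, x⟩ + c)·u where u := g_r(x̄)/‖g_r(x̄)‖; consequently φ vanishes identically on a neighborhood of x̄. -/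
open scoped RealInnerProductSpace

noncomputable section

/-- Fréchet derivative of the norm on a real inner product space, at a nonzero point. -/
theorem myNormDeriv {F : Type*} [NormedAddCommGroup F] [InnerProductSpace ℝ F]
    (y : F) (hy : y ≠ 0) : HasFDerivAt (fun z : F => ‖z‖) (‖y‖⁻¹ • innerSL ℝ y) y := by
  have h1 : HasFDerivAt (fun z : F => ‖z‖ ^ 2) (2 • (innerSL ℝ y)) y :=
    (hasStrictFDerivAt_norm_sq y).hasFDerivAt
  have h2 : HasDerivAt Real.sqrt (1 / (2 * Real.sqrt (‖y‖^2))) (‖y‖^2) :=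
    Real.hasDerivAt_sqrt (pow_ne_zero 2 (norm_ne_zero_iff.2 hy))
  have h3 := h2.comp_hasFDerivAt y h1
  have he : (Real.sqrt ∘ fun z : F => ‖z‖^2) = fun z : F => ‖z‖ := by
    funext z; simp [Function.comp, Real.sqrt_sq (norm_nonneg z)]
  rw [he] at h3
  refine h3.congr_fderiv ?_
  rw [Real.sqrt_sq (norm_nonneg y)]
  ext v
  have : ‖y‖ ≠ 0 := norm_ne_zero_iff.2 hy
  simp [two_smul]
  ring

/-- The tail map as a continuous linear map. -/
def tailCLM (d : ℕ) : EuclideanSpace ℝ (Fin (d+1)) →L[ℝ] EuclideanSpace ℝ (Fin d) :=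
  LinearMap.toContinuousLinearMap
  { toFun := tail
    map_add' := fun y z => by ext i; simp [tail]
    map_smul' := fun c y => by ext i; simp [tail] }

@[simp] theorem tailCLM_apply {d : ℕ} (y : EuclideanSpace ℝ (Fin (d+1))) (i : Fin d) :
    tailCLM d y i = y i.succ := by simp [tailCLM, tail]

/-- `y ↦ (innerSL ℝ y).comp T` as a continuous linear map. -/
def innerCompCLM {m k : ℕ}
    (T : EuclideanSpace ℝ (Fin k) →L[ℝ] EuclideanSpace ℝ (Fin m)) :
    EuclideanSpace ℝ (Fin m) →L[ℝ] (EuclideanSpace ℝ (Fin k) →L[ℝ] ℝ) :=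
  LinearMap.toContinuousLinearMap
  { toFun := fun y => (innerSL ℝ y).comp T
    map_add' := fun y z => by ext v; simp [inner_add_left]
    map_smul' := fun c y => by ext v; simp [inner_smul_left] }

@[simp] theorem innerCompCLM_apply {m k : ℕ}
    (T : EuclideanSpace ℝ (Fin k) →L[ℝ] EuclideanSpace ℝ (Fin m))
    (y : EuclideanSpace ℝ (Fin m)) (v : EuclideanSpace ℝ (Fin k)) :
    innerCompCLM T y v = ⟪y, T v⟫ := rfl

set_option maxHeartbeats 1000000 in
theorem affine_boundary_degenerate_structure (n d : ℕ)
    (A : EuclideanSpace ℝ (Fin n) →ₗ[ℝ] EuclideanSpace ℝ (Fin (d+1)))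
    (b : EuclideanSpace ℝ (Fin (d+1))) (xb : EuclideanSpace ℝ (Fin n))
    (hb : (A xb + b) 0 = ‖tail (A xb + b)‖) (hpos : 0 < (A xb + b) 0)
    (hgrad : fderiv ℝ (fun x => (A x + b) 0 - ‖tail (A x + b)‖) xb = 0)
    (hhess : fderiv ℝ (fderiv ℝ (fun x => (A x + b) 0 - ‖tail (A x + b)‖)) xb = 0) :
    ∃ w : EuclideanSpace ℝ (Fin n), ∃ c : ℝ,
      (∀ x : EuclideanSpace ℝ (Fin n),
        (A x + b) 0 = ⟪w, x⟫ + c ∧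
        tail (A x + b) = (⟪w, x⟫ + c) • (‖tail (A xb + b)‖⁻¹ • tail (A xb + b))) ∧
      ∃ U ∈ nhds xb, ∀ x ∈ U, (A x + b) 0 - ‖tail (A x + b)‖ = 0 := by
  classical
  set Ac : EuclideanSpace ℝ (Fin n) →L[ℝ] EuclideanSpace ℝ (Fin (d+1)) :=
    LinearMap.toContinuousLinearMap A with hAcdef
  set Arc : EuclideanSpace ℝ (Fin n) →L[ℝ] EuclideanSpace ℝ (Fin d) :=
    (tailCLM d).comp Ac with hArcdef
  set A0c : EuclideanSpace ℝ (Fin n) →L[ℝ] ℝ :=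
    (EuclideanSpace.proj 0).comp Ac with hA0cdef
  set tb : EuclideanSpace ℝ (Fin d) := tail b with htbdef
  have htail : ∀ x : EuclideanSpace ℝ (Fin n), tail (A x + b) = Arc x + tb := by
    intro x; ext i
    simp [tail, hArcdef, hAcdef, htbdef, PiLp.add_apply]
  have hhead : ∀ x : EuclideanSpace ℝ (Fin n), (A x + b) 0 = A0c x + b 0 := by
    intro x; simp [hA0cdef, hAcdef, PiLp.add_apply]
  have hfun : (fun x : EuclideanSpace ℝ (Fin n) => (A x + b) 0 - ‖tail (A x + b)‖)
      = fun x => (A0c x + b 0) - ‖Arc x + tb‖ := by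
    funext x; rw [htail, hhead]
  rw [hfun] at hgrad hhess
  set y₀ : EuclideanSpace ℝ (Fin d) := Arc xb + tb with hy₀def
  have hy₀tail : tail (A xb + b) = y₀ := htail xb
  have hny₀ : ‖y₀‖ = A0c xb + b 0 := by rw [← hy₀tail, ← hb, hhead]
  have hpos' : 0 < ‖y₀‖ := by rw [hny₀, ← hhead]; exact hpos
  have hy₀ : y₀ ≠ 0 := by
    intro h; rw [h] at hpos'; simp at hpos'
  have hny₀' : ‖y₀‖ ≠ 0 := ne_of_gt hpos'
  have hgr : ∀ x : EuclideanSpace ℝ (Fin n),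
      HasFDerivAt (fun x => Arc x + tb) Arc x := fun x => (Arc.hasFDerivAt).add_const tb
  have hg0 : ∀ x : EuclideanSpace ℝ (Fin n),
      HasFDerivAt (fun x => A0c x + b 0) A0c x := fun x => (A0c.hasFDerivAt).add_const (b 0)
  have hφder : ∀ x : EuclideanSpace ℝ (Fin n), Arc x + tb ≠ 0 →
      HasFDerivAt (fun x => (A0c x + b 0) - ‖Arc x + tb‖)
        (A0c - ‖Arc x + tb‖⁻¹ • innerCompCLM Arc (Arc x + tb)) x := by
    intro x hx
    have h1 := (myNormDeriv _ hx).comp x (hgr x)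
    have h2 : HasFDerivAt (fun x : EuclideanSpace ℝ (Fin n) => ‖Arc x + tb‖)
        (‖Arc x + tb‖⁻¹ • innerCompCLM Arc (Arc x + tb)) x := by
      exact h1
    exact (hg0 x).sub h2
  -- gradient condition
  have hGxb : A0c - ‖y₀‖⁻¹ • innerCompCLM Arc y₀ = 0 := by
    rw [← (hφder xb hy₀).fderiv]; exact hgrad
  have key1 : ∀ h : EuclideanSpace ℝ (Fin n), ⟪y₀, Arc h⟫ = ‖y₀‖ * A0c h := by
    intro h
    have h1 := ContinuousLinearMap.ext_iff.mp hGxb h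
    simp only [ContinuousLinearMap.sub_apply, ContinuousLinearMap.smul_apply,
      innerCompCLM_apply, ContinuousLinearMap.zero_apply, smul_eq_mul] at h1
    have h2 : A0c h = ‖y₀‖⁻¹ * ⟪y₀, Arc h⟫ := by linarith
    rw [h2]; field_simp
  -- second derivative
  have hev : fderiv ℝ (fun x => (A0c x + b 0) - ‖Arc x + tb‖)
      =ᶠ[nhds xb] fun x => A0c - ‖Arc x + tb‖⁻¹ • innerCompCLM Arc (Arc x + tb) := by
    have hV : IsOpen {x : EuclideanSpace ℝ (Fin n) | Arc x + tb ≠ 0} := by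
      have : Continuous fun x : EuclideanSpace ℝ (Fin n) => Arc x + tb :=
        (Arc.continuous).add continuous_const
      exact isOpen_compl_singleton.preimage this
    filter_upwards [hV.mem_nhds hy₀] with x hx
    exact (hφder x hx).fderiv
  have hGd0 : fderiv ℝ
      (fun x => A0c - ‖Arc x + tb‖⁻¹ • innerCompCLM Arc (Arc x + tb)) xb = 0 := by
    rw [← hev.fderiv_eq]; exact hhess
  set DN : EuclideanSpace ℝ (Fin n) →L[ℝ] ℝ :=
    (-(‖y₀‖^2)⁻¹) • ((‖y₀‖⁻¹ • innerSL ℝ y₀).comp Arc) with hDNdef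
  have hN : HasFDerivAt (fun x : EuclideanSpace ℝ (Fin n) => ‖Arc x + tb‖⁻¹) DN xb := by
    have hnorm : HasFDerivAt (fun x : EuclideanSpace ℝ (Fin n) => ‖Arc x + tb‖)
        ((‖y₀‖⁻¹ • innerSL ℝ y₀).comp Arc) xb := (myNormDeriv y₀ hy₀).comp xb (hgr xb)
    exact (hasDerivAt_inv hny₀').comp_hasFDerivAt xb hnorm
  have hB : HasFDerivAt (fun x : EuclideanSpace ℝ (Fin n) => innerCompCLM Arc (Arc x + tb))
      ((innerCompCLM Arc).comp Arc) xb := ((innerCompCLM Arc).hasFDerivAt).comp xb (hgr xb)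
  have hNB := hN.smul hB
  have hG : HasFDerivAt (fun x => A0c - ‖Arc x + tb‖⁻¹ • innerCompCLM Arc (Arc x + tb))
      (-(‖y₀‖⁻¹ • ((innerCompCLM Arc).comp Arc)
        + DN.smulRight (innerCompCLM Arc y₀))) xb := hNB.const_sub A0c
  have hD0 : ‖y₀‖⁻¹ • ((innerCompCLM Arc).comp Arc)
      + DN.smulRight (innerCompCLM Arc y₀) = 0 := by
    have h1 := hG.fderiv
    rw [hGd0] at h1
    set_option synthInstance.maxHeartbeats 400000 in
    exact (neg_eq_zero (α := EuclideanSpace ℝ (Fin n) →L[ℝ] EuclideanSpace ℝ (Fin n) →L[ℝ] ℝ)).mp h1.symm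
  have key2 : ∀ h : EuclideanSpace ℝ (Fin n), ‖Arc h‖^2 = (A0c h)^2 := by
    intro h
    have h1 := ContinuousLinearMap.ext_iff.mp (ContinuousLinearMap.ext_iff.mp hD0 h) h
    simp only [ContinuousLinearMap.add_apply, ContinuousLinearMap.smul_apply,
      ContinuousLinearMap.comp_apply, ContinuousLinearMap.smulRight_apply,
      innerCompCLM_apply, ContinuousLinearMap.zero_apply, smul_eq_mul, hDNdef,
      ContinuousLinearMap.neg_apply, innerSL_apply_apply] at h1
    rw [real_inner_self_eq_norm_sq, key1 h] at h1
    field_simp at h1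
    have h2 : (‖Arc h‖^2 - (A0c h)^2) * ‖y₀‖^2 = 0 := by linear_combination ‖y₀‖^2 * h1
    rcases mul_eq_zero.mp h2 with h3 | h3
    · linarith
    · exact absurd h3 (by positivity)
  set u : EuclideanSpace ℝ (Fin d) := ‖y₀‖⁻¹ • y₀ with hudef
  have hu1 : ‖u‖ = 1 := by
    rw [hudef, norm_smul]
    simp [abs_of_pos (inv_pos.2 hpos'), inv_mul_cancel₀ hny₀']
  have huA : ∀ h : EuclideanSpace ℝ (Fin n), ⟪u, Arc h⟫ = A0c h := by
    intro h
    rw [hudef, real_inner_smul_left, key1 h]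
    field_simp
  have key3 : ∀ h : EuclideanSpace ℝ (Fin n), Arc h = A0c h • u := by
    intro h
    have hsq : ‖Arc h - A0c h • u‖^2 = 0 := by
      rw [norm_sub_sq_real, real_inner_smul_right, real_inner_comm, huA h, norm_smul]
      rw [key2 h, hu1]
      simp only [Real.norm_eq_abs, mul_pow, sq_abs, mul_one, one_pow]
      ring
    have h6 := norm_eq_zero.mp ((pow_eq_zero_iff (two_ne_zero)).mp hsq)
    exact sub_eq_zero.mp h6
  have htb : tb = b 0 • u := by
    have hy₀u : y₀ = ‖y₀‖ • u := by
      rw [hudef, smul_smul, mul_inv_cancel₀ hny₀', one_smul]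
    have h5 : tb = y₀ - Arc xb := by rw [hy₀def]; abel
    rw [h5, hy₀u, key3 xb, hny₀, ← sub_smul]
    congr 1; ring
  -- assemble
  refine ⟨(InnerProductSpace.toDual ℝ (EuclideanSpace ℝ (Fin n))).symm A0c, b 0, ?_, ?_⟩
  · intro x
    have hw : ⟪(InnerProductSpace.toDual ℝ (EuclideanSpace ℝ (Fin n))).symm A0c, x⟫ = A0c x :=
      InnerProductSpace.toDual_symm_apply
    refine ⟨by rw [hhead, hw], ?_⟩
    rw [htail, key3 x, htb, hy₀tail, hw, ← hudef, ← add_smul]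
  · refine ⟨{x : EuclideanSpace ℝ (Fin n) | 0 < A0c x + b 0}, ?_, ?_⟩
    · have hV : IsOpen {x : EuclideanSpace ℝ (Fin n) | 0 < A0c x + b 0} :=
        isOpen_lt continuous_const ((A0c.continuous).add continuous_const)
      exact hV.mem_nhds (by simpa [hhead] using hpos)
    · intro x hx
      have h6 : tail (A x + b) = (A0c x + b 0) • u := by
        rw [htail, key3 x, htb, ← add_smul]
      rw [hhead, h6, norm_smul, hu1, Real.norm_eq_abs, abs_of_pos hx]
      ring
end
end
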